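/- Let K be an imaginary quadratic field with ring of integers O_K, let σ : K ↪ ℂ be a field embedding, let Ω ∈ ℂ be nonzero, and set Γ := Ω·σ(O_K), a lattice in ℂ. Let α ∈ O_K be nonzero, let a, b be integers with a ≥ 0 and b ≥ a + 3, let z ∈ ℂ with σ(α)·z ∉ Γ, and let S ⊂ ℂ be a complete set of representatives of the finite quotient group (σ(α)^{−1}·Γ)/Γ. Then all the following series converge absolutely and Σ_{z₀ ∈ S} Σ_{γ ∈ Γ} conj(z + z₀ + γ)^a / (z + z₀ + γ)^b = conj(σ(α))^{−a} · σ(α)^{b} · Σ_{γ ∈ Γ} conj(σ(α)z + γ)^a / (σ(α)z + γ)^b. (This is the distribution relation of the classical Eisenstein–Kronecker series in the region of absolute convergence.) -/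

import Mathlib

/-! `Γ = Ω·σ(O_K)` is the `ℤ`-span of an `ℝ`-basis of `ℂ`: since `σ` is not real, `σ(O_K)` spans
`ℂ` over `ℝ`, and `O_K` has rank 2. So `Γ` is discrete of rank 2 and `∑_γ ‖w + γ‖^(a-b)` converges
for `b - a > 2`. For the identity, `(z₀, γ) ↦ z₀ + γ` is a bijection `S × Γ ≃ σ(α)⁻¹Γ`,
multiplication by `A = σ(α)` maps `σ(α)⁻¹Γ` onto `Γ`, and every term rescales as
`conj t^a / t^b = conj A^(-a) · A^b · conj (A t)^a / (A t)^b`, also at the pole `t = 0`, where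
both sides take the junk value `0`. -/

open Complex MeasureTheory NumberField
open scoped ComplexConjugate

/-- The lattice `Γ := Ω·σ(O_K) ⊂ ℂ`. -/
noncomputable def latOf (K : Type*) [Field K] [NumberField K] (σ : K →+* ℂ) (Ω : ℂ) :
    Submodule ℤ ℂ :=
  Submodule.span ℤ (Set.range fun x : 𝓞 K => Ω * σ (algebraMap (𝓞 K) K x))

open Module Submodule

namespace AddSubgroup

variable {G : Type*} [AddCommGroup G] {L M : AddSubgroup G} {S : Set G}

noncomputable def prodEquivOfCosetReps (hLM : L ≤ M) (hSM : S ⊆ M)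
    (hS : ∀ m ∈ M, ∃! s, s ∈ S ∧ m - s ∈ L) : S × L ≃ M :=
  Equiv.ofBijective (fun p => ⟨p.1 + p.2, M.add_mem (hSM p.1.2) (hLM p.2.2)⟩) <| by
    constructor
    · rintro ⟨s, γ⟩ ⟨s', γ'⟩ h
      have hsum : (s : G) + γ = s' + γ' := congrArg Subtype.val h
      have hdiff : (s : G) - s' = γ' - γ := by rw [sub_eq_sub_iff_add_eq_add, hsum, add_comm]
      have hs : (s : G) = s' :=
        (hS s (hSM s.2)).unique ⟨s.2, by simp⟩ ⟨s'.2, hdiff ▸ L.sub_mem γ'.2 γ.2⟩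
      have hγ : (γ : G) = γ' := by rw [hs] at hsum; exact add_left_cancel hsum
      exact Prod.ext (Subtype.ext hs) (Subtype.ext hγ)
    · rintro ⟨m, hm⟩
      obtain ⟨s, ⟨hs, hms⟩, -⟩ := hS m hm
      exact ⟨(⟨s, hs⟩, ⟨m - s, hms⟩), Subtype.ext (add_sub_cancel s m)⟩

theorem sum_tsum_add_eq_tsum_of_cosetReps {α : Type*} [AddCommGroup α] [UniformSpace α]
    [IsUniformAddGroup α] [CompleteSpace α] [T0Space α] {S : Finset G} (hLM : L ≤ M)
    (hSM : (S : Set G) ⊆ M) (hS : ∀ m ∈ M, ∃! s, s ∈ S ∧ m - s ∈ L) {f : G → α}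
    (hf : Summable fun m : M => f m) :
    ∑ s ∈ S, ∑' γ : L, f (s + γ) = ∑' m : M, f m := by
  let e := prodEquivOfCosetReps hLM hSM hS
  have hprod : Summable fun p : ↥(S : Set G) × L => f ((p.1 : G) + p.2) :=
    e.summable_iff (f := fun m : M => f m) |>.2 hf
  calc ∑ s ∈ S, ∑' γ : L, f (s + γ) = ∑' s : ↥(S : Set G), ∑' γ : L, f ((s : G) + γ) :=
        (Finset.tsum_subtype S _).symm
    _ = ∑' p : ↥(S : Set G) × L, f ((p.1 : G) + p.2) := hprod.tsum_prod.symm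
    _ = ∑' m : M, f m := e.tsum_eq fun m : M => f m

end AddSubgroup

section Scaling

variable {𝕜 : Type*} [DivisionRing 𝕜] {L : AddSubgroup 𝕜} {A : 𝕜}

variable (L) in
def AddSubgroup.comapMulLeftEquiv (hA : A ≠ 0) :
    L.comap (AddMonoidHom.mulLeft A) ≃ L :=
  (Equiv.mulLeft₀ A hA).subtypeEquiv fun _ => Iff.rfl

variable {α : Type*} [AddCommMonoid α] [TopologicalSpace α] {f : 𝕜 → α}

theorem summable_comap_mulLeft_iff (hA : A ≠ 0) :
    (Summable fun m : L.comap (AddMonoidHom.mulLeft A) => f (A * m)) ↔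
      Summable fun γ : L => f γ :=
  (L.comapMulLeftEquiv hA).summable_iff (f := fun γ : L => f γ)

theorem tsum_comap_mulLeft (hA : A ≠ 0) :
    ∑' m : L.comap (AddMonoidHom.mulLeft A), f (A * m) = ∑' γ : L, f γ :=
  (L.comapMulLeftEquiv hA).tsum_eq fun γ : L => f γ

end Scaling

theorem conj_zpow_div_zpow_eq_mul {A : ℂ} (hA : A ≠ 0) (a b : ℤ) (t : ℂ) :
    conj t ^ a / t ^ b = conj A ^ (-a) * A ^ b * (conj (A * t) ^ a / (A * t) ^ b) := by
  have hcA : conj A ≠ 0 := (map_ne_zero _).2 hA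
  rw [map_mul, mul_zpow, mul_zpow, mul_div_mul_comm, ← mul_assoc, zpow_neg]
  field_simp

theorem norm_conj_zpow_div_zpow {a b : ℤ} (hab : a ≠ b) (t : ℂ) :
    ‖conj t ^ a / t ^ b‖ = ‖t‖ ^ (a - b) := by
  rcases eq_or_ne t 0 with rfl | ht
  · rcases eq_or_ne a 0 with rfl | ha <;> simp [zero_zpow, *, sub_eq_zero]
  · rw [norm_div, norm_zpow, norm_zpow, Complex.norm_conj, zpow_sub₀ (norm_ne_zero_iff.2 ht)]

theorem summable_conj_zpow_div_zpow {L : Submodule ℤ ℂ} [DiscreteTopology L] {a b : ℤ}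
    (hab : finrank ℤ L < b - a) (w : ℂ) :
    Summable fun γ : L => conj (w + γ) ^ a / (w + γ) ^ b := by
  refine .of_norm <|
    (ZLattice.summable_norm_sub_zpow L (a - b) (by omega) (-w)).congr fun γ => ?_
  rw [norm_conj_zpow_div_zpow (by omega), sub_neg_eq_add, add_comm]

section Lattice

variable {K : Type*} [Field K] [NumberField K] {σ : K →+* ℂ} {Ω : ℂ}

variable (K σ Ω) in
noncomputable def latMap : 𝓞 K →ₗ[ℤ] ℂ :=
  ((AddMonoidHom.mulLeft Ω).comp (σ.toAddMonoidHom.comp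
    (algebraMap (𝓞 K) K).toAddMonoidHom)).toIntLinearMap

theorem latOf_eq_range : latOf K σ Ω = LinearMap.range (latMap K σ Ω) := by
  change span ℤ (Set.range (latMap K σ Ω)) = _
  rw [← LinearMap.coe_range, span_eq]

theorem mem_latOf_iff {c : ℂ} : c ∈ latOf K σ Ω ↔ ∃ x : 𝓞 K, c = Ω * σ x := by
  rw [latOf_eq_range, LinearMap.mem_range]
  exact exists_congr fun _ => eq_comm

theorem mul_mem_latOf (α : 𝓞 K) {c : ℂ} (hc : c ∈ latOf K σ Ω) : σ α * c ∈ latOf K σ Ω := by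
  obtain ⟨x, rfl⟩ := mem_latOf_iff.1 hc
  exact mem_latOf_iff.2 ⟨α * x, by simp only [map_mul]; ring⟩

theorem mul_mem_span_integralBasis (x : K) :
    Ω * σ x ∈ span ℝ (Set.range fun i => Ω * σ (integralBasis K i)) := by
  rw [← (integralBasis K).sum_repr x, map_sum, Finset.mul_sum]
  refine sum_mem fun i _ => ?_
  have h : Ω * σ ((integralBasis K).repr x i • integralBasis K i)
      = ((integralBasis K).repr x i : ℝ) • (Ω * σ (integralBasis K i)) := by
    rw [Rat.smul_def, map_mul, map_ratCast, Complex.real_smul]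
    push_cast
    ring
  exact h ▸ smul_mem _ _ (subset_span ⟨i, rfl⟩)

theorem linearIndependent_mul_pair (hΩ : Ω ≠ 0) {w : ℂ} (hw : w.im ≠ 0) :
    LinearIndependent ℝ ![Ω, Ω * w] := by
  refine LinearIndependent.pair_iff.2 fun s t hst => ?_
  have h : (s : ℂ) + t * w = 0 := by
    rw [Complex.real_smul, Complex.real_smul] at hst
    exact (mul_eq_zero.1 (by linear_combination hst)).resolve_left hΩ
  have ht : t = 0 := by simpa [hw] using congrArg Complex.im h
  exact ⟨by simpa [ht] using h, ht⟩

theorem exists_basis_latOf_eq_span (hdeg : finrank ℚ K = 2) (him : ∃ x : K, (σ x).im ≠ 0)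
    (hΩ : Ω ≠ 0) :
    ∃ b : Basis (Free.ChooseBasisIndex ℤ (𝓞 K)) ℝ ℂ, latOf K σ Ω = span ℤ (Set.range b) := by
  obtain ⟨x₀, hx₀⟩ := him
  set v := fun i => Ω * σ (integralBasis K i)
  have hcard : Fintype.card (Free.ChooseBasisIndex ℤ (𝓞 K)) = finrank ℝ ℂ := by
    rw [← finrank_eq_card_chooseBasisIndex, RingOfIntegers.rank, hdeg,
      Complex.finrank_real_complex]
  have hspan : ⊤ ≤ span ℝ (Set.range v) := by
    rw [← (linearIndependent_mul_pair hΩ hx₀).span_eq_top_of_card_eq_finrank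
      (by simp [Complex.finrank_real_complex])]
    refine span_le.2 ?_
    rintro _ ⟨i, rfl⟩
    fin_cases i
    · simpa [v] using mul_mem_span_integralBasis (σ := σ) (Ω := Ω) 1
    · exact mul_mem_span_integralBasis x₀
  refine ⟨basisOfTopLeSpanOfCardEqFinrank v hspan hcard, ?_⟩
  rw [coe_basisOfTopLeSpanOfCardEqFinrank, latOf_eq_range, LinearMap.range_eq_map,
    ← (RingOfIntegers.basis K).span_eq, map_span, ← Set.range_comp]
  congr 2
  funext i
  simp [v, latMap, integralBasis_apply]

theorem discreteTopology_latOf (hdeg : finrank ℚ K = 2) (him : ∃ x : K, (σ x).im ≠ 0)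
    (hΩ : Ω ≠ 0) : DiscreteTopology (latOf K σ Ω) := by
  obtain ⟨b, hb⟩ := exists_basis_latOf_eq_span hdeg him hΩ
  rw [hb]
  infer_instance

theorem finrank_latOf (hdeg : finrank ℚ K = 2) (him : ∃ x : K, (σ x).im ≠ 0) (hΩ : Ω ≠ 0) :
    finrank ℤ (latOf K σ Ω) = 2 := by
  obtain ⟨b, hb⟩ := exists_basis_latOf_eq_span hdeg him hΩ
  rw [hb, ZLattice.rank ℝ, Complex.finrank_real_complex]

theorem summable_conj_zpow_div_zpow_latOf (hdeg : finrank ℚ K = 2)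
    (him : ∃ x : K, (σ x).im ≠ 0) (hΩ : Ω ≠ 0) {a b : ℤ} (hab : a + 3 ≤ b) (w : ℂ) :
    Summable fun γ : latOf K σ Ω => conj (w + γ) ^ a / (w + γ) ^ b :=
  have := discreteTopology_latOf hdeg him hΩ
  summable_conj_zpow_div_zpow (by rw [finrank_latOf hdeg him hΩ]; omega) w

end Lattice

theorem eisensteinKronecker_distribution_relation_general
    (K : Type*) [Field K] [NumberField K]
    (hdeg : Module.finrank ℚ K = 2) (σ : K →+* ℂ) (him : ∃ x : K, (σ x).im ≠ 0)
    (Ω : ℂ) (hΩ : Ω ≠ 0)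
    (α : 𝓞 K) (hα : α ≠ 0)
    (a b : ℤ) (hb : a + 3 ≤ b)
    (z : ℂ)
    (S : Finset ℂ)
    (hSmem : ∀ z₀ ∈ S, ∃ x : 𝓞 K,
      σ (algebraMap (𝓞 K) K α) * z₀ = Ω * σ (algebraMap (𝓞 K) K x))
    (hSrep : ∀ w : ℂ, (∃ x : 𝓞 K,
        σ (algebraMap (𝓞 K) K α) * w = Ω * σ (algebraMap (𝓞 K) K x)) →
      ∃! z₀, z₀ ∈ S ∧ w - z₀ ∈ latOf K σ Ω) :
    (∀ z₀ ∈ S, Summable fun γ : latOf K σ Ω =>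
        conj (z + z₀ + (γ : ℂ)) ^ a / (z + z₀ + (γ : ℂ)) ^ b) ∧
    (Summable fun γ : latOf K σ Ω =>
        conj (σ (algebraMap (𝓞 K) K α) * z + (γ : ℂ)) ^ a /
          (σ (algebraMap (𝓞 K) K α) * z + (γ : ℂ)) ^ b) ∧
    ∑ z₀ ∈ S, ∑' γ : latOf K σ Ω, conj (z + z₀ + (γ : ℂ)) ^ a / (z + z₀ + (γ : ℂ)) ^ b =
      conj (σ (algebraMap (𝓞 K) K α)) ^ (-a) * σ (algebraMap (𝓞 K) K α) ^ b *
        ∑' γ : latOf K σ Ω,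
          conj (σ (algebraMap (𝓞 K) K α) * z + (γ : ℂ)) ^ a /
            (σ (algebraMap (𝓞 K) K α) * z + (γ : ℂ)) ^ b := by
  set A := σ (algebraMap (𝓞 K) K α)
  have hA : A ≠ 0 := by simpa [A] using hα
  have hsum := summable_conj_zpow_div_zpow_latOf hdeg him hΩ hb
  refine ⟨fun z₀ _ => hsum (z + z₀), hsum (A * z), ?_⟩
  set Γ := (latOf K σ Ω).toAddSubgroup
  set M := Γ.comap (AddMonoidHom.mulLeft A)
  set F : ℂ → ℂ := fun t => conj t ^ a / t ^ b
  set c := conj A ^ (-a) * A ^ b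
  have hscale (m : ℂ) : F (z + m) = c * F (A * z + A * m) := by
    rw [← mul_add]
    exact conj_zpow_div_zpow_eq_mul hA a b _
  have hΓM : Γ ≤ M := fun γ hγ => mul_mem_latOf α hγ
  have hSM : (S : Set ℂ) ⊆ M := fun z₀ hz₀ => mem_latOf_iff.2 (hSmem z₀ hz₀)
  have hS (m : ℂ) (hm : m ∈ M) : ∃! s, s ∈ S ∧ m - s ∈ Γ := hSrep m (mem_latOf_iff.1 hm)
  have hsumM : Summable fun m : M => F (z + m) :=
    (((summable_comap_mulLeft_iff hA (f := fun γ => F (A * z + γ))).2 (hsum (A * z))).mul_left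
      c).congr fun m => (hscale m).symm
  calc ∑ z₀ ∈ S, ∑' γ : Γ, F (z + z₀ + γ)
      = ∑' m : M, F (z + m) := by
        simp only [add_assoc]
        exact AddSubgroup.sum_tsum_add_eq_tsum_of_cosetReps (f := fun w => F (z + w))
          hΓM hSM hS hsumM
    _ = c * ∑' m : M, F (A * z + A * m) := by
        rw [← tsum_mul_left]
        exact tsum_congr fun m => hscale m
    _ = c * ∑' γ : Γ, F (A * z + γ) := by rw [tsum_comap_mulLeft hA (f := fun γ => F (A * z + γ))]

/-- The distribution relation for the classical Eisenstein–Kronecker series in the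
region of absolute convergence:
`Σ_{z₀ ∈ S} Σ_{γ ∈ Γ} conj(z+z₀+γ)^a/(z+z₀+γ)^b
  = conj(σα)^{−a}·σα^{b}·Σ_{γ ∈ Γ} conj(σα·z+γ)^a/(σα·z+γ)^b`. -/
theorem eisensteinKronecker_distribution_relation
    (K : Type*) [Field K] [NumberField K]
    (hdeg : Module.finrank ℚ K = 2) (σ : K →+* ℂ) (him : ∃ x : K, (σ x).im ≠ 0)
    (Ω : ℂ) (hΩ : Ω ≠ 0)
    (α : 𝓞 K) (hα : α ≠ 0)
    (a b : ℤ) (ha : 0 ≤ a) (hb : a + 3 ≤ b)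
    (z : ℂ) (hz : σ (algebraMap (𝓞 K) K α) * z ∉ latOf K σ Ω)
    (S : Finset ℂ)
    (hSmem : ∀ z₀ ∈ S, ∃ x : 𝓞 K,
      σ (algebraMap (𝓞 K) K α) * z₀ = Ω * σ (algebraMap (𝓞 K) K x))
    (hSrep : ∀ w : ℂ, (∃ x : 𝓞 K,
        σ (algebraMap (𝓞 K) K α) * w = Ω * σ (algebraMap (𝓞 K) K x)) →
      ∃! z₀, z₀ ∈ S ∧ w - z₀ ∈ latOf K σ Ω) :
    (∀ z₀ ∈ S, Summable fun γ : latOf K σ Ω =>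
        conj (z + z₀ + (γ : ℂ)) ^ a / (z + z₀ + (γ : ℂ)) ^ b) ∧
    (Summable fun γ : latOf K σ Ω =>
        conj (σ (algebraMap (𝓞 K) K α) * z + (γ : ℂ)) ^ a /
          (σ (algebraMap (𝓞 K) K α) * z + (γ : ℂ)) ^ b) ∧
    ∑ z₀ ∈ S, ∑' γ : latOf K σ Ω, conj (z + z₀ + (γ : ℂ)) ^ a / (z + z₀ + (γ : ℂ)) ^ b =
      conj (σ (algebraMap (𝓞 K) K α)) ^ (-a) * σ (algebraMap (𝓞 K) K α) ^ b *
        ∑' γ : latOf K σ Ω,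
          conj (σ (algebraMap (𝓞 K) K α) * z + (γ : ℂ)) ^ a /
            (σ (algebraMap (𝓞 K) K α) * z + (γ : ℂ)) ^ b :=
  eisensteinKronecker_distribution_relation_general K hdeg σ him Ω hΩ α hα a b hb z S hSmem hSrep
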